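/- Suppose that for each n ≥ 1, g_n is a ∂̄-closed smooth (0,1)-form on the unit ball of a Banach space X⁽ⁿ⁾ that is not ∂̄-exact on any open subset, and that X⁽ⁿ⁾ embeds in X via norm-1 inclusions J_n with norm-1 projections ρ_n : X → X⁽ⁿ⁾ satisfying ρ_n ∘ J_n = id. Then the pullback forms f_n = ρ_n^* g_n are linearly independent in the Dolbeault cohomology group H^{0,1}_∂̄(B_X(1)); in particular, if λ₁f₁ + ⋯ + λ_nf_n = ∂̄u for some C¹ function u on B_X(1) and λᵢ ∈ ℂ, then all λᵢ = 0. -/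

import Mathlib

open scoped BigOperators

section
variable {W : Type*} [NormedAddCommGroup W] [NormedSpace ℂ W]

/-- The `∂̄` of a function on a complex Banach space, as a function of a tangent vector:
`∂̄u(x)ξ = ½(Du(x)ξ + i·Du(x)(iξ))`, using the real Fréchet derivative. -/
noncomputable def dbarAt (u : W → ℂ) (x : W) (ξ : W) : ℂ :=
  (1/2 : ℂ) * (fderiv ℝ u x ξ + Complex.I * fderiv ℝ u x (Complex.I • ξ))
end

/-- Suppose `g_n` is a `∂̄`-closed smooth `(0,1)`-form on the unit ball of a
Banach space `X⁽ⁿ⁾`, not `∂̄`-exact on any open subset, and `X⁽ⁿ⁾` embeds in `X` via norm-one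
inclusions `J_n` with norm-one projections `ρ_n` satisfying `ρ_n J_n = id`, `ρ_n J_m = 0` for
`m ≠ n`. Then the pullbacks `f_n = ρ_n^* g_n` are linearly independent in
`H^{0,1}_∂̄(B_X(1))`: if `λ₁f₁ + ⋯ + λ_Nf_N = ∂̄u` for a `C¹` function `u` on `B_X(1)`,
then all `λᵢ = 0`. -/
theorem pullback_forms_linearly_independent
    (X : Type*) [NormedAddCommGroup X] [NormedSpace ℂ X] [CompleteSpace X]
    (Xn : ℕ → Type*) [∀ n, NormedAddCommGroup (Xn n)] [∀ n, NormedSpace ℂ (Xn n)]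
    [∀ n, CompleteSpace (Xn n)]
    (g : ∀ n, Xn n → (Xn n →L[ℝ] ℂ))
    -- each `g n` is a smooth `(0,1)`-form on the unit ball of `Xn n`
    (hg01 : ∀ n, ∀ x ∈ Metric.ball (0 : Xn n) 1, ∀ ξ,
      g n x (Complex.I • ξ) = -Complex.I * g n x ξ)
    (hgC : ∀ n, ContDiffOn ℝ (⊤ : ℕ∞) (g n) (Metric.ball (0 : Xn n) 1))
    -- each `g n` is `∂̄`-closed
    (hgcl : ∀ n, ∀ x ∈ Metric.ball (0 : Xn n) 1, ∀ ξ η,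
      (fderiv ℝ (g n) x ξ) η + Complex.I * (fderiv ℝ (g n) x (Complex.I • ξ)) η =
      (fderiv ℝ (g n) x η) ξ + Complex.I * (fderiv ℝ (g n) x (Complex.I • η)) ξ)
    -- each `g n` is nowhere `∂̄`-exact
    (hgne : ∀ n, ∀ G : Set (Xn n), IsOpen G → G.Nonempty →
      G ⊆ Metric.ball (0 : Xn n) 1 →
      ¬∃ u : Xn n → ℂ, ContDiffOn ℝ 1 u G ∧
        ∀ x ∈ G, ∀ ξ, dbarAt u x ξ = g n x ξ)
    (J : ∀ n, Xn n →L[ℂ] X) (ρ : ∀ n, X →L[ℂ] Xn n)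
    (hJnorm : ∀ n, ‖J n‖ ≤ 1) (hρnorm : ∀ n, ‖ρ n‖ ≤ 1)
    (hρJ : ∀ n x, ρ n (J n x) = x)
    (hρJ' : ∀ m n, m ≠ n → ∀ x, ρ n (J m x) = 0) :
    ∀ (N : ℕ) (lam : Fin N → ℂ) (u : X → ℂ),
      ContDiffOn ℝ 1 u (Metric.ball (0 : X) 1) →
      (∀ x ∈ Metric.ball (0 : X) 1, ∀ ξ : X,
        dbarAt u x ξ = ∑ i : Fin N, lam i * g i (ρ i x) (ρ i ξ)) →
      ∀ i, lam i = 0 := by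
  intro N lam u hu hdbar i
  by_contra hlam
  have hJball : ∀ y : Xn i, y ∈ Metric.ball (0 : Xn i) 1 →
      J i y ∈ Metric.ball (0 : X) 1 := by
    intro y hy
    rw [Metric.mem_ball, dist_zero_right] at hy ⊢
    calc ‖J (i : ℕ) y‖ ≤ ‖J (i : ℕ)‖ * ‖y‖ := (J i).le_opNorm y
      _ ≤ 1 * ‖y‖ := by
          exact mul_le_mul_of_nonneg_right (hJnorm i) (norm_nonneg y)
      _ = ‖y‖ := one_mul _
      _ < 1 := hy
  refine hgne i (Metric.ball 0 1) Metric.isOpen_ball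
    ⟨0, Metric.mem_ball_self one_pos⟩ subset_rfl ⟨fun y => (lam i)⁻¹ * u (J i y), ?_, ?_⟩
  · exact contDiffOn_const.mul
      (hu.comp ((J (i : ℕ)).restrictScalars ℝ).contDiff.contDiffOn
        (fun y hy => hJball y hy))
  · intro x hx ξ
    have hxX : J i x ∈ Metric.ball (0 : X) 1 := hJball x hx
    have hux : DifferentiableAt ℝ u (J i x) :=
      (hu.differentiableOn one_ne_zero).differentiableAt (Metric.isOpen_ball.mem_nhds hxX)
    have hJd : DifferentiableAt ℝ (fun y : Xn i => J i y) x :=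
      ((J (i : ℕ)).restrictScalars ℝ).differentiableAt
    have hcomp : ∀ η : Xn i,
        fderiv ℝ (fun y => (lam i)⁻¹ * u (J i y)) x η =
          (lam i)⁻¹ * fderiv ℝ u (J i x) (J i η) := by
      intro η
      have hJfd : fderiv ℝ (⇑(J (i : ℕ))) x = (J (i : ℕ)).restrictScalars ℝ := by
        have h := ((J (i : ℕ)).restrictScalars ℝ).fderiv (x := x)
        simpa using h
      have h1 : fderiv ℝ (fun y : Xn i => u (J i y)) x =
          (fderiv ℝ u (J i x)).comp ((J (i : ℕ)).restrictScalars ℝ) := by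
        have h := fderiv_comp (𝕜 := ℝ) x hux hJd
        rw [hJfd] at h
        exact h
      have h2 : fderiv ℝ (fun y => (lam i)⁻¹ * u (J i y)) x =
          (lam i)⁻¹ • fderiv ℝ (fun y : Xn i => u (J i y)) x :=
        fderiv_const_mul (hux.comp x hJd) _
      rw [h2, h1]
      simp
    have key : dbarAt (fun y => (lam i)⁻¹ * u (J i y)) x ξ =
        (lam i)⁻¹ * dbarAt u (J i x) (J i ξ) := by
      unfold dbarAt
      rw [hcomp, hcomp, map_smul]
      ring
    rw [key, hdbar (J i x) hxX (J i ξ)]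
    have hsum : ∑ j : Fin N, lam j * g j (ρ j (J i x)) (ρ j (J i ξ)) =
        lam i * g i x ξ := by
      rw [Finset.sum_eq_single i]
      · rw [hρJ i x, hρJ i ξ]
      · intro j _ hji
        have : ((i : ℕ) ≠ (j : ℕ)) := fun h => hji (Fin.ext h.symm)
        rw [hρJ' i j this x, hρJ' i j this ξ, map_zero, mul_zero]
      · intro h; exact absurd (Finset.mem_univ i) h
    rw [hsum]
    field_simp
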